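/- Let r = R(k, k+1) be the Ramsey number. Then every LC orbit of graphs on n ≥ r vertices contains a graph with an independent set of size at least k; consequently Λ_n ≥ k for n ≥ r. -/

import Mathlib

/-- Local complementation at a vertex `v`: toggle each edge between distinct
neighbours of `v`, keeping all other adjacencies unchanged. -/
def localComp {V : Type*} (G : SimpleGraph V) (v : V) : SimpleGraph V where
  Adj a b := Xor' (G.Adj a b) (a ≠ b ∧ G.Adj v a ∧ G.Adj v b)
  symm := by
    constructor
    intro a b h
    rcases h with ⟨h1, h2⟩ | ⟨h1, h2⟩
    · exact Or.inl ⟨h1.symm, fun ⟨hne, ha, hb⟩ => h2 ⟨hne.symm, hb, ha⟩⟩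
    · exact Or.inr ⟨⟨h1.1.symm, h1.2.2, h1.2.1⟩, fun hg => h2 hg.symm⟩
  loopless := by
    constructor
    intro a h
    rcases h with ⟨h1, _⟩ | ⟨⟨h1, _⟩, _⟩
    · exact G.irrefl h1
    · exact h1 rfl

/-- One step of LC-equivalence: either a local complementation at some vertex, or a
graph isomorphism (relabelling of the vertices). -/
inductive LCStep {V : Type} : SimpleGraph V → SimpleGraph V → Prop
  | lc (G : SimpleGraph V) (v : V) : LCStep G (localComp G v)
  | iso (G G' : SimpleGraph V) (e : G ≃g G') : LCStep G G'

/-- LC-equivalence: the reflexive-transitive closure of local complementations and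
isomorphisms. -/
def LCEquiv {V : Type} (G G' : SimpleGraph V) : Prop :=
  Relation.ReflTransGen LCStep G G'

/-- The independence number of a finite graph: the largest size of a set of pairwise
non-adjacent vertices. -/
noncomputable def indepNum {V : Type} [Fintype V] (G : SimpleGraph V) : ℕ :=
  sSup {k | ∃ s : Finset V, s.card = k ∧ ∀ a ∈ s, ∀ b ∈ s, a ≠ b → ¬ G.Adj a b}

/-- λ(G): the maximum independence number attained over the LC orbit of G. -/
noncomputable def lambdaLC {V : Type} [Fintype V] (G : SimpleGraph V) : ℕ :=
  sSup {k | ∃ K : SimpleGraph V, LCEquiv G K ∧ indepNum K = k}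

/-- Λ_n: the minimum of λ over all LC orbits of connected simple graphs on n
vertices. -/
noncomputable def LambdaMin (n : ℕ) : ℕ :=
  sInf {k | ∃ G : SimpleGraph (Fin n), G.Connected ∧ lambdaLC G = k}

/-- The Ramsey number R(m,n): the least r such that every simple graph on at least r
vertices contains an independent set of size m or a clique of size n. -/
noncomputable def ramseyNumber (m n : ℕ) : ℕ :=
  sInf {r : ℕ | ∀ (V : Type) (_ : Fintype V), r ≤ Fintype.card V →
    ∀ G : SimpleGraph V,
      (∃ s : Finset V, s.card = m ∧ ∀ a ∈ s, ∀ b ∈ s, a ≠ b → ¬ G.Adj a b) ∨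
      (∃ s : Finset V, G.IsNClique n s)}


theorem ramsey_exists (m n : ℕ) : ∃ r : ℕ, ∀ (V : Type) (_ : Fintype V), r ≤ Fintype.card V →
    ∀ G : SimpleGraph V,
      (∃ s : Finset V, s.card = m ∧ ∀ a ∈ s, ∀ b ∈ s, a ≠ b → ¬ G.Adj a b) ∨
      (∃ s : Finset V, G.IsNClique n s) := by
  induction m generalizing n with
  | zero => exact ⟨0, fun V _ _ G => Or.inl ⟨∅, by simp⟩⟩
  | succ m ihm =>
    induction n with
    | zero => exact ⟨0, fun V _ _ G => Or.inr ⟨∅, by simp⟩⟩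
    | succ n ihn =>
      obtain ⟨r1, h1⟩ := ihm (n + 1)
      obtain ⟨r2, h2⟩ := ihn
      refine ⟨r1 + r2 + 1, fun V inst hcard G => ?_⟩
      classical
      haveI hne : Nonempty V := Fintype.card_pos_iff.mp (by omega)
      obtain ⟨v⟩ := hne
      set A : Finset V := Finset.univ.filter (fun u => u ≠ v ∧ ¬ G.Adj v u) with hA
      set B : Finset V := Finset.univ.filter (fun u => G.Adj v u) with hB
      have hdisj : Disjoint A B := by
        rw [Finset.disjoint_left]
        intro u hu hu'
        rw [hA, Finset.mem_filter] at hu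
        rw [hB, Finset.mem_filter] at hu'
        exact hu.2.2 hu'.2
      have hunion : A ∪ B = Finset.univ.erase v := by
        ext u
        by_cases huv : u = v
        · subst huv
          simp [hA, hB, G.loopless.irrefl u]
        · by_cases hadj : G.Adj v u <;> simp [hA, hB, huv, hadj]
      have hcards : A.card + B.card + 1 = Fintype.card V := by
        have := Finset.card_union_of_disjoint hdisj
        rw [hunion, Finset.card_erase_of_mem (Finset.mem_univ v), Finset.card_univ] at this
        omega
      have key : r1 ≤ A.card ∨ r2 ≤ B.card := by omega
      rcases key with hAc | hBc
      · -- restrict to non-neighbours A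
        have hres := h1 {x // x ∈ A} inferInstance (by simpa using hAc)
          (G.comap (fun x : {x // x ∈ A} => (x : V)))
        rcases hres with ⟨s', hcard', hind⟩ | ⟨s', hclq⟩
        · -- independent set of size m in A; add v
          refine Or.inl ?_
          set s : Finset V := s'.map ⟨Subtype.val, Subtype.val_injective⟩ with hs
          have hsub : ∀ a ∈ s, a ∈ A := by
            intro a ha
            rw [hs, Finset.mem_map] at ha
            obtain ⟨a', _, rfl⟩ := ha
            exact a'.2
          have hvs : v ∉ s := fun h => by
            have := hsub v h
            rw [hA, Finset.mem_filter] at this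
            exact this.2.1 rfl
          refine ⟨insert v s, ?_, ?_⟩
          · rw [Finset.card_insert_of_notMem hvs, hs, Finset.card_map, hcard']
          · intro a ha b hb hab
            have hnadj : ∀ u ∈ s, ¬ G.Adj v u := by
              intro u hu
              have := hsub u hu
              rw [hA, Finset.mem_filter] at this
              exact this.2.2
            have hss : ∀ a ∈ s, ∀ b ∈ s, a ≠ b → ¬ G.Adj a b := by
              intro a ha b hb hab
              rw [hs, Finset.mem_map] at ha hb
              obtain ⟨a', ha', rfl⟩ := ha
              obtain ⟨b', hb', rfl⟩ := hb
              exact hind a' ha' b' hb' (fun h => hab (congrArg _ h))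
            rcases Finset.mem_insert.mp ha with rfl | ha <;>
              rcases Finset.mem_insert.mp hb with rfl | hb
            · exact absurd rfl hab
            · exact hnadj b hb
            · exact fun h => hnadj a ha h.symm
            · exact hss a ha b hb hab
        · -- clique of size n+1 already
          refine Or.inr ⟨s'.map ⟨Subtype.val, Subtype.val_injective⟩, ?_, ?_⟩
          · intro a ha b hb hab
            simp only [Finset.coe_map, Set.mem_image, Finset.mem_coe] at ha hb
            obtain ⟨a', ha', rfl⟩ := ha
            obtain ⟨b', hb', rfl⟩ := hb
            exact hclq.1 ha' hb' (fun h => hab (congrArg _ h))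
          · rw [Finset.card_map, hclq.2]
      · -- restrict to neighbours B
        have hres := h2 {x // x ∈ B} inferInstance (by simpa using hBc)
          (G.comap (fun x : {x // x ∈ B} => (x : V)))
        rcases hres with ⟨s', hcard', hind⟩ | ⟨s', hclq⟩
        · refine Or.inl ⟨s'.map ⟨Subtype.val, Subtype.val_injective⟩, by
            rw [Finset.card_map, hcard'], ?_⟩
          intro a ha b hb hab
          rw [Finset.mem_map] at ha hb
          obtain ⟨a', ha', rfl⟩ := ha
          obtain ⟨b', hb', rfl⟩ := hb
          exact hind a' ha' b' hb' (fun h => hab (congrArg _ h))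
        · -- clique of size n among neighbours; add v
          refine Or.inr ?_
          set s : Finset V := s'.map ⟨Subtype.val, Subtype.val_injective⟩ with hs
          have hclqV : G.IsNClique n s := by
            constructor
            · intro a ha b hb hab
              simp only [hs, Finset.coe_map, Set.mem_image, Finset.mem_coe] at ha hb
              obtain ⟨a', ha', rfl⟩ := ha
              obtain ⟨b', hb', rfl⟩ := hb
              exact hclq.1 ha' hb' (fun h => hab (congrArg _ h))
            · rw [hs, Finset.card_map, hclq.2]
          have hadj : ∀ b ∈ s, G.Adj v b := by
            intro b hb
            rw [hs, Finset.mem_map] at hb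
            obtain ⟨b', _, rfl⟩ := hb
            exact (Finset.mem_filter.mp b'.2).2
          exact ⟨insert v s, hclqV.insert hadj⟩

section Helpers

variable {V : Type} [Fintype V]

lemma indep_bddAbove (G : SimpleGraph V) :
    BddAbove {k | ∃ s : Finset V, s.card = k ∧ ∀ a ∈ s, ∀ b ∈ s, a ≠ b → ¬ G.Adj a b} := by
  refine ⟨Fintype.card V, ?_⟩
  rintro k ⟨s, rfl, -⟩
  exact le_trans (Finset.card_le_card (Finset.subset_univ s)) (le_of_eq Finset.card_univ)

lemma le_indepNum (G : SimpleGraph V) {s : Finset V}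
    (h : ∀ a ∈ s, ∀ b ∈ s, a ≠ b → ¬ G.Adj a b) : s.card ≤ indepNum G :=
  le_csSup (indep_bddAbove G) ⟨s, rfl, h⟩

lemma indepNum_le_card (G : SimpleGraph V) : indepNum G ≤ Fintype.card V := by
  refine csSup_le ⟨0, ∅, by simp⟩ ?_
  rintro k ⟨s, rfl, -⟩
  exact le_trans (Finset.card_le_card (Finset.subset_univ s)) (le_of_eq Finset.card_univ)

lemma le_lambdaLC (G : SimpleGraph V) {K : SimpleGraph V} (hK : LCEquiv G K) {k : ℕ}
    (h : k ≤ indepNum K) : k ≤ lambdaLC G := by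
  refine le_trans h (le_csSup ?_ ⟨K, hK, rfl⟩)
  refine ⟨Fintype.card V, ?_⟩
  rintro j ⟨K', -, rfl⟩
  exact indepNum_le_card K'

end Helpers

/-- If r = R(k, k+1) is the Ramsey number, then every LC orbit of graphs on n ≥ r
vertices contains a graph with an independent set of size at least k; consequently
Λ_n ≥ k for n ≥ r. -/
theorem ramsey_lower_bound_Lambda (k n : ℕ) (hn : ramseyNumber k (k + 1) ≤ n) :
    (∀ G : SimpleGraph (Fin n), ∃ K : SimpleGraph (Fin n),
        LCEquiv G K ∧ k ≤ indepNum K) ∧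
      k ≤ LambdaMin n := by
  classical
  have hmem : ramseyNumber k (k + 1) ∈ {r : ℕ | ∀ (V : Type) (_ : Fintype V),
      r ≤ Fintype.card V → ∀ G : SimpleGraph V,
      (∃ s : Finset V, s.card = k ∧ ∀ a ∈ s, ∀ b ∈ s, a ≠ b → ¬ G.Adj a b) ∨
      (∃ s : Finset V, G.IsNClique (k + 1) s)} := by
    obtain ⟨r, hr⟩ := ramsey_exists k (k + 1)
    exact Nat.sInf_mem ⟨r, hr⟩
  have main : ∀ G : SimpleGraph (Fin n), ∃ K : SimpleGraph (Fin n),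
      LCEquiv G K ∧ k ≤ indepNum K := by
    intro G
    have := hmem (Fin n) inferInstance (by simpa using hn) G
    rcases this with ⟨s, hcard, hind⟩ | ⟨s, hclq⟩
    · exact ⟨G, Relation.ReflTransGen.refl, hcard ▸ le_indepNum G hind⟩
    · have hpos : 0 < s.card := by rw [hclq.2]; omega
      obtain ⟨v, hv⟩ := Finset.card_pos.mp hpos
      refine ⟨localComp G v, Relation.ReflTransGen.single (LCStep.lc G v), ?_⟩
      have hcard : (s.erase v).card = k := by
        rw [Finset.card_erase_of_mem hv, hclq.2]; omega
      have hind : ∀ a ∈ s.erase v, ∀ b ∈ s.erase v, a ≠ b → ¬ (localComp G v).Adj a b := by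
        intro a ha b hb hab hadj
        obtain ⟨hav, has⟩ := Finset.mem_erase.mp ha
        obtain ⟨hbv, hbs⟩ := Finset.mem_erase.mp hb
        have hGab : G.Adj a b := hclq.1 has hbs hab
        have hGva : G.Adj v a := hclq.1 hv has (Ne.symm hav)
        have hGvb : G.Adj v b := hclq.1 hv hbs (Ne.symm hbv)
        rcases hadj with ⟨-, h2⟩ | ⟨-, h2⟩
        · exact h2 ⟨hab, hGva, hGvb⟩
        · exact h2 hGab
      calc k = (s.erase v).card := hcard.symm
        _ ≤ _ := le_indepNum _ hind
  refine ⟨main, ?_⟩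
  by_cases hS : {j | ∃ G : SimpleGraph (Fin n), G.Connected ∧ lambdaLC G = j}.Nonempty
  · refine le_csInf hS ?_
    rintro j ⟨G, -, rfl⟩
    obtain ⟨K, hK, hk⟩ := main G
    exact le_lambdaLC G hK hk
  · -- no connected graph on Fin n: then n = 0, hence k = 0
    have hn0 : n = 0 := by
      by_contra h
      haveI : Nonempty (Fin n) := ⟨⟨0, Nat.pos_of_ne_zero h⟩⟩
      exact hS ⟨lambdaLC (⊤ : SimpleGraph (Fin n)),
        ⟨⊤, SimpleGraph.connected_top, rfl⟩⟩
    subst hn0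
    obtain ⟨K, -, hk⟩ := main ⊥
    have : indepNum K ≤ 0 := le_trans (indepNum_le_card K) (by simp)
    omega
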